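/- Let φ : ℝ → ℝ be a smooth nonincreasing function with 0 ≤ φ ≤ 1, φ(t) = 1 for t ≤ 0, φ(t) = 0 for t ≥ 1, and |φ'(t)| + |φ''(t)| < 10 for all t. For ε > 0 let φ_ε(w) = φ( ((log(1/|w|))⁻¹ − ε)/ε ) for 0 < |w| < 1. Fix integers 1 ≤ l ≤ m and define Φ(z₁,…,z_m) = ∏_{i=1}^{l} (1 − φ_ε(z_i)) on the domain { z ∈ ℂ^m : 0 < |z_i| < 1 for i ≤ l, |z_i| < 1 for i > l }. Then there is a constant C, independent of ε, such that on this domain: (i) for each 1 ≤ i ≤ l, |∂_{z_i} Φ(z)| ≤ C / ( |z_i| · log(1/|z_i|) ); (ii) ∂_{z_i} Φ = 0 for i > l; (iii) for every vector w ∈ ℂ^m, | ∑_{i,j=1}^{m} (∂_{z_i} ∂̄_{z_j} Φ)(z) · w_i · conj(w_j) | ≤ C ∑_{i=1}^{l} |w_i|² / ( |z_i|² (log(1/|z_i|))² ). -/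

import Mathlib

/-- The Wirtinger derivative `∂_{z_i} f` in the `i`-th variable of a function
`f : (Fin m → ℂ) → ℂ`, computed via the real Fréchet derivative. -/
noncomputable def wDm {m : ℕ} (i : Fin m) (f : (Fin m → ℂ) → ℂ) (z : Fin m → ℂ) : ℂ :=
  (fderiv ℝ f z (Pi.single i 1) - Complex.I * fderiv ℝ f z (Pi.single i Complex.I)) / 2

/-- The conjugate Wirtinger derivative `∂̄_{z_i} f` in the `i`-th variable. -/
noncomputable def wDbarm {m : ℕ} (i : Fin m) (f : (Fin m → ℂ) → ℂ) (z : Fin m → ℂ) : ℂ :=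
  (fderiv ℝ f z (Pi.single i 1) + Complex.I * fderiv ℝ f z (Pi.single i Complex.I)) / 2

/-- The cut-off function `Φ(z) = ∏_{i < l} (1 − φ_ε(z_i))`, viewed as a complex-valued
function on `ℂ^m`. -/
noncomputable def cutoffProd (φ : ℝ → ℝ) (ε : ℝ) (m l : ℕ) (y : Fin m → ℂ) : ℂ :=
  ((∏ i ∈ Finset.univ.filter (fun i : Fin m => (i : ℕ) < l),
      (1 - φ (((Real.log (1 / ‖y i‖))⁻¹ - ε) / ε)) : ℝ) : ℂ)


open Real Set

noncomputable def aA (ε t : ℝ) : ℝ := ((-Real.log t / 2)⁻¹ - ε) / ε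
noncomputable def aA' (ε t : ℝ) : ℝ := 2 / (ε * t * (Real.log t) ^ 2)
noncomputable def aA'' (ε t : ℝ) : ℝ :=
  (2 / ε) * (-(t ^ 2 * (Real.log t) ^ 2)⁻¹ - 2 * (t ^ 2 * (Real.log t) ^ 3)⁻¹)
noncomputable def uu (φ : ℝ → ℝ) (ε t : ℝ) : ℝ := 1 - φ (aA ε t)
noncomputable def uu1 (φ : ℝ → ℝ) (ε t : ℝ) : ℝ := -(deriv φ (aA ε t)) * aA' ε t
noncomputable def uu2 (φ : ℝ → ℝ) (ε t : ℝ) : ℝ :=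
  -(deriv (deriv φ) (aA ε t)) * (aA' ε t) ^ 2 - deriv φ (aA ε t) * aA'' ε t

variable {φ : ℝ → ℝ} {ε t : ℝ}

lemma log_ne (ht : t ∈ Ioo (0:ℝ) 1) : Real.log t ≠ 0 :=
  ne_of_lt (Real.log_neg ht.1 ht.2)

lemma hasDerivAt_aA (hε : 0 < ε) (ht : t ∈ Ioo (0:ℝ) 1) :
    HasDerivAt (aA ε) (aA' ε t) t := by
  have hlog : HasDerivAt Real.log t⁻¹ t := Real.hasDerivAt_log ht.1.ne'
  have h1 : HasDerivAt (fun t => -Real.log t / 2) (-t⁻¹ / 2) t := (hlog.neg).div_const 2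
  have h2 : HasDerivAt (fun t => (-Real.log t / 2)⁻¹)
      (-(-t⁻¹ / 2) / (-Real.log t / 2) ^ 2) t := by
    exact h1.inv (by simpa using div_ne_zero (neg_ne_zero.2 (log_ne ht)) two_ne_zero)
  have h3 := (h2.sub_const ε).div_const ε
  refine h3.congr_deriv ?_
  unfold aA'
  have h4 : Real.log t ≠ 0 := log_ne ht
  field_simp

lemma hasDerivAt_aA' (hε : 0 < ε) (ht : t ∈ Ioo (0:ℝ) 1) :
    HasDerivAt (aA' ε) (aA'' ε t) t := by
  have hlog : HasDerivAt Real.log t⁻¹ t := Real.hasDerivAt_log ht.1.ne'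
  have hden : HasDerivAt (fun t => ε * t * (Real.log t) ^ 2)
      (ε * (Real.log t) ^ 2 + ε * t * (2 * Real.log t * t⁻¹)) t := by
    have h1 : HasDerivAt (fun t => ε * t) ε t := (hasDerivAt_id t).const_mul ε |>.congr_deriv (by ring)
    have h2 : HasDerivAt (fun t => (Real.log t) ^ 2) (2 * Real.log t * t⁻¹) t := by
      simpa using (hlog.fun_pow 2)
    simpa [mul_comm] using h1.fun_mul h2
  have hne : ε * t * (Real.log t) ^ 2 ≠ 0 :=
    mul_ne_zero (mul_ne_zero hε.ne' ht.1.ne') (pow_ne_zero 2 (log_ne ht))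
  have h3 := ((hden.inv hne).const_mul 2)
  refine h3.congr_deriv ?_
  unfold aA''
  have h4 : Real.log t ≠ 0 := log_ne ht
  have h5 : t ≠ 0 := ht.1.ne'
  field_simp
  ring

lemma hasDerivAt_uu (hφ : ContDiff ℝ (⊤ : ℕ∞) φ) (hε : 0 < ε) (ht : t ∈ Ioo (0:ℝ) 1) :
    HasDerivAt (uu φ ε) (uu1 φ ε t) t := by
  have h1 : HasDerivAt φ (deriv φ (aA ε t)) (aA ε t) :=
    ((hφ.differentiable (by simp)) (aA ε t)).hasDerivAt
  have := (h1.comp t (hasDerivAt_aA hε ht)).const_sub 1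
  refine this.congr_deriv ?_
  unfold uu1; ring

lemma hasDerivAt_uu1 (hφ : ContDiff ℝ (⊤ : ℕ∞) φ) (hε : 0 < ε) (ht : t ∈ Ioo (0:ℝ) 1) :
    HasDerivAt (uu1 φ ε) (uu2 φ ε t) t := by
  have h1 : HasDerivAt (deriv φ) (deriv (deriv φ) (aA ε t)) (aA ε t) :=
    (((ContDiff.iterate_deriv 1 (hφ.of_le (by simp))).differentiable
      (by simp)) (aA ε t)).hasDerivAt
  have h2 := ((h1.comp t (hasDerivAt_aA hε ht)).neg).mul (hasDerivAt_aA' hε ht)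
  refine h2.congr_deriv ?_
  unfold uu2
  simp only [Pi.neg_apply, Function.comp_apply]
  ring

lemma identity_lap (hε : 0 < ε) (ht : t ∈ Ioo (0:ℝ) 1) :
    aA'' ε t * t + aA' ε t = -4 / (ε * t * (Real.log t) ^ 3) := by
  have h4 : Real.log t ≠ 0 := log_ne ht
  have h5 : t ≠ 0 := ht.1.ne'
  unfold aA' aA''
  field_simp
  ring

lemma derivφ_zero (hφle : ∀ t : ℝ, t ≤ 0 → φ t = 1) (hφge : ∀ t : ℝ, 1 ≤ t → φ t = 0)
    {s : ℝ} (hs : s < 0 ∨ 1 < s) : deriv φ s = 0 := by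
  rcases hs with hs | hs
  · have h : φ =ᶠ[nhds s] fun _ => (1:ℝ) :=
      Filter.eventuallyEq_of_mem (Iio_mem_nhds hs) (fun x hx => hφle x (le_of_lt hx))
    rw [h.deriv_eq, deriv_const]
  · have h : φ =ᶠ[nhds s] fun _ => (0:ℝ) :=
      Filter.eventuallyEq_of_mem (Ioi_mem_nhds hs) (fun x hx => hφge x (le_of_lt hx))
    rw [h.deriv_eq, deriv_const]

lemma deriv2φ_zero (hφle : ∀ t : ℝ, t ≤ 0 → φ t = 1) (hφge : ∀ t : ℝ, 1 ≤ t → φ t = 0)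
    {s : ℝ} (hs : s < 0 ∨ 1 < s) : deriv (deriv φ) s = 0 := by
  rcases hs with hs | hs
  · have h : deriv φ =ᶠ[nhds s] fun _ => (0:ℝ) :=
      Filter.eventuallyEq_of_mem (Iio_mem_nhds hs)
        (fun x hx => derivφ_zero hφle hφge (Or.inl hx))
    rw [h.deriv_eq, deriv_const]
  · have h : deriv φ =ᶠ[nhds s] fun _ => (0:ℝ) :=
      Filter.eventuallyEq_of_mem (Ioi_mem_nhds hs)
        (fun x hx => derivφ_zero hφle hφge (Or.inr hx))
    rw [h.deriv_eq, deriv_const]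

lemma support_ineq (hε : 0 < ε) (ht : t ∈ Ioo (0:ℝ) 1) (ha : aA ε t ≤ 1) :
    1 ≤ ε * (-Real.log t) := by
  have hs : Real.log t < 0 := Real.log_neg ht.1 ht.2
  have h1 : (-Real.log t / 2)⁻¹ - ε ≤ ε := (div_le_one hε).mp ha
  have h2 : (-Real.log t / 2)⁻¹ ≤ 2 * ε := by linarith
  have h3 : (0:ℝ) < -Real.log t / 2 := by linarith
  rw [inv_le_iff_one_le_mul₀ h3] at h2
  nlinarith

lemma bound_uu1 (hφle : ∀ t : ℝ, t ≤ 0 → φ t = 1) (hφge : ∀ t : ℝ, 1 ≤ t → φ t = 0)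
    (hφbound : ∀ t : ℝ, |deriv φ t| + |deriv (deriv φ) t| < 10)
    (hε : 0 < ε) (ht : t ∈ Ioo (0:ℝ) 1) :
    |uu1 φ ε t| ≤ 20 / (t * (-Real.log t)) := by
  have hs : Real.log t < 0 := Real.log_neg ht.1 ht.2
  have ht0 := ht.1
  by_cases h : aA ε t < 0 ∨ 1 < aA ε t
  · have : uu1 φ ε t = 0 := by
      unfold uu1; rw [derivφ_zero hφle hφge h]; ring
    rw [this, abs_zero]
    have hp : 0 < t * (-Real.log t) := mul_pos ht0 (neg_pos.2 hs)
    positivity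
  · push_neg at h
    have h1 : 1 ≤ ε * (-Real.log t) := support_ineq hε ht h.2
    have h10 : |deriv φ (aA ε t)| ≤ 10 :=
      le_of_lt (lt_of_le_of_lt (le_add_of_nonneg_right (abs_nonneg _)) (hφbound (aA ε t)))
    have haA' : (0:ℝ) ≤ aA' ε t := by
      unfold aA'; positivity
    have : |uu1 φ ε t| ≤ 10 * aA' ε t := by
      unfold uu1
      rw [abs_mul, abs_neg]
      rw [abs_of_nonneg haA']
      exact mul_le_mul_of_nonneg_right h10 haA'
    refine this.trans ?_
    unfold aA'
    have hl2 : 0 < Real.log t ^ 2 := by nlinarith [mul_pos (neg_pos.2 hs) (neg_pos.2 hs)]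
    rw [show (10:ℝ) * (2 / (ε * t * Real.log t ^ 2)) = 20 / (ε * t * Real.log t ^ 2) by ring]
    rw [div_le_div_iff₀ (by positivity) (mul_pos ht0 (neg_pos.2 hs))]
    have hkey := mul_le_mul_of_nonneg_left h1 (le_of_lt (mul_pos ht0 (neg_pos.2 hs)))
    nlinarith [hkey]

lemma bound_lap (hφle : ∀ t : ℝ, t ≤ 0 → φ t = 1) (hφge : ∀ t : ℝ, 1 ≤ t → φ t = 0)
    (hφbound : ∀ t : ℝ, |deriv φ t| + |deriv (deriv φ) t| < 10)
    (hε : 0 < ε) (ht : t ∈ Ioo (0:ℝ) 1) :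
    |uu2 φ ε t * t + uu1 φ ε t| ≤ 80 / (t * (Real.log t) ^ 2) := by
  have hs : Real.log t < 0 := Real.log_neg ht.1 ht.2
  have ht0 := ht.1
  by_cases h : aA ε t < 0 ∨ 1 < aA ε t
  · have h1 : deriv φ (aA ε t) = 0 := derivφ_zero hφle hφge h
    have h2 : deriv (deriv φ) (aA ε t) = 0 := deriv2φ_zero hφle hφge h
    have : uu2 φ ε t * t + uu1 φ ε t = 0 := by
      unfold uu2 uu1; rw [h1, h2]; ring
    rw [this, abs_zero]
    positivity
  · push_neg at h
    have h1 : 1 ≤ ε * (-Real.log t) := support_ineq hε ht h.2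
    have h10 : |deriv φ (aA ε t)| ≤ 10 :=
      le_of_lt (lt_of_le_of_lt (le_add_of_nonneg_right (abs_nonneg _)) (hφbound (aA ε t)))
    have h10' : |deriv (deriv φ) (aA ε t)| ≤ 10 :=
      le_of_lt (lt_of_le_of_lt (le_add_of_nonneg_left (abs_nonneg _)) (hφbound (aA ε t)))
    have hid : uu2 φ ε t * t + uu1 φ ε t =
        -(deriv (deriv φ) (aA ε t)) * (aA' ε t) ^ 2 * t
          - deriv φ (aA ε t) * (-4 / (ε * t * (Real.log t) ^ 3)) := by
      unfold uu2 uu1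
      rw [← identity_lap hε ht]
      ring
    rw [hid]
    have e1 : |(-(deriv (deriv φ) (aA ε t))) * (aA' ε t) ^ 2 * t| ≤
        10 * ((aA' ε t) ^ 2 * t) := by
      rw [abs_mul, abs_mul, abs_neg]
      have : |(aA' ε t) ^ 2| = (aA' ε t)^2 := abs_of_nonneg (sq_nonneg _)
      rw [this, abs_of_nonneg (le_of_lt ht0)]
      have := mul_le_mul_of_nonneg_right h10' (mul_nonneg (sq_nonneg (aA' ε t)) (le_of_lt ht0))
      nlinarith [sq_nonneg (aA' ε t)]
    have e2 : |deriv φ (aA ε t) * (-4 / (ε * t * (Real.log t) ^ 3))| ≤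
        10 * (4 / (ε * t * (-Real.log t) ^ 3)) := by
      rw [abs_mul]
      have h3 : 0 < -Real.log t := neg_pos.2 hs
      have hx : |(-4 / (ε * t * (Real.log t) ^ 3))| = 4 / (ε * t * (-Real.log t) ^ 3) := by
        rw [show (-4 / (ε * t * (Real.log t) ^ 3)) = 4 / (ε * t * (-Real.log t) ^ 3) by ring]
        exact abs_of_nonneg (by positivity)
      rw [hx]
      exact mul_le_mul_of_nonneg_right h10 (by positivity)
    have h3 : 0 < -Real.log t := neg_pos.2 hs
    have hl2 : 0 < Real.log t ^ 2 := by nlinarith [mul_pos h3 h3]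
    have b1 : 10 * ((aA' ε t) ^ 2 * t) ≤ 40 / (t * (Real.log t) ^ 2) := by
      have haa : aA' ε t = 2 / (ε * t * Real.log t ^ 2) := rfl
      rw [haa, show (10:ℝ) * ((2 / (ε * t * Real.log t ^ 2)) ^ 2 * t) =
          (40 * t) / (ε * t * Real.log t ^ 2) ^ 2 by rw [div_pow]; ring]
      rw [div_le_div_iff₀ (by positivity) (by positivity)]
      have hq : 1 ≤ (ε * -Real.log t) ^ 2 := by nlinarith
      have hb := mul_le_mul_of_nonneg_left hq
        (le_of_lt (mul_pos (mul_pos (by norm_num : (0:ℝ) < 40) (mul_pos ht0 ht0)) hl2))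
      nlinarith [hb]
    have b2 : 10 * (4 / (ε * t * (-Real.log t) ^ 3)) ≤ 40 / (t * (Real.log t) ^ 2) := by
      rw [show (10:ℝ) * (4 / (ε * t * (-Real.log t) ^ 3)) = 40 / (ε * t * (-Real.log t) ^ 3) by ring]
      rw [div_le_div_iff₀ (by positivity) (by positivity)]
      have hb := mul_le_mul_of_nonneg_left h1 (le_of_lt (mul_pos ht0 hl2))
      nlinarith [hb]
    calc |(-(deriv (deriv φ) (aA ε t))) * (aA' ε t) ^ 2 * t
          - deriv φ (aA ε t) * (-4 / (ε * t * (Real.log t) ^ 3))|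
        ≤ |(-(deriv (deriv φ) (aA ε t))) * (aA' ε t) ^ 2 * t|
          + |deriv φ (aA ε t) * (-4 / (ε * t * (Real.log t) ^ 3))| := abs_sub _ _
      _ ≤ 10 * ((aA' ε t) ^ 2 * t) + 10 * (4 / (ε * t * (-Real.log t) ^ 3)) := add_le_add e1 e2
      _ ≤ 40 / (t * (Real.log t) ^ 2) + 40 / (t * (Real.log t) ^ 2) := add_le_add b1 b2
      _ = 80 / (t * (Real.log t) ^ 2) := by ring

open Complex in
noncomputable def NQ (w : ℂ) : ℂ →L[ℝ] ℝ :=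
  (2 * w.re) • Complex.reCLM + (2 * w.im) • Complex.imCLM

lemma hasFDerivAt_normSq (w : ℂ) : HasFDerivAt Complex.normSq (NQ w) w := by
  have hre : HasFDerivAt (fun z : ℂ => z.re) Complex.reCLM w := Complex.reCLM.hasFDerivAt
  have him : HasFDerivAt (fun z : ℂ => z.im) Complex.imCLM w := Complex.imCLM.hasFDerivAt
  have h := (hre.mul hre).add (him.mul him)
  have hfun : Complex.normSq = fun z : ℂ => z.re * z.re + z.im * z.im :=
    funext Complex.normSq_apply
  rw [hfun]
  refine h.congr_fderiv ?_
  unfold NQ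
  ext1 v <;> simp <;> ring

noncomputable def Gf (φ : ℝ → ℝ) (ε : ℝ) (w : ℂ) : ℂ := ((uu φ ε (Complex.normSq w) : ℝ) : ℂ)

noncomputable def DGf (φ : ℝ → ℝ) (ε : ℝ) (w : ℂ) : ℂ →L[ℝ] ℂ :=
  Complex.ofRealCLM.comp ((uu1 φ ε (Complex.normSq w)) • NQ w)

lemma hasFDerivAt_Gf (hφ : ContDiff ℝ (⊤ : ℕ∞) φ) (hε : 0 < ε) {w : ℂ}
    (hw : Complex.normSq w ∈ Ioo (0:ℝ) 1) : HasFDerivAt (Gf φ ε) (DGf φ ε w) w := by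
  have h1 : HasDerivAt (uu φ ε) (uu1 φ ε (Complex.normSq w)) (Complex.normSq w) :=
    hasDerivAt_uu hφ hε hw
  have h2 := h1.comp_hasFDerivAt w (hasFDerivAt_normSq w)
  exact Complex.ofRealCLM.hasFDerivAt.comp w h2

noncomputable def Gq (φ : ℝ → ℝ) (ε : ℝ) (w : ℂ) : ℂ :=
  ((uu1 φ ε (Complex.normSq w) : ℝ) : ℂ) * w

noncomputable def DGq (φ : ℝ → ℝ) (ε : ℝ) (w : ℂ) : ℂ →L[ℝ] ℂ :=
  (uu1 φ ε (Complex.normSq w)) • ContinuousLinearMap.id ℝ ℂ +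
    ((uu2 φ ε (Complex.normSq w)) • NQ w).smulRight w

lemma hasFDerivAt_Gq (hφ : ContDiff ℝ (⊤ : ℕ∞) φ) (hε : 0 < ε) {w : ℂ}
    (hw : Complex.normSq w ∈ Ioo (0:ℝ) 1) : HasFDerivAt (Gq φ ε) (DGq φ ε w) w := by
  have h1 : HasDerivAt (uu1 φ ε) (uu2 φ ε (Complex.normSq w)) (Complex.normSq w) :=
    hasDerivAt_uu1 hφ hε hw
  have hc : HasFDerivAt (fun z : ℂ => uu1 φ ε (Complex.normSq z))
      ((uu2 φ ε (Complex.normSq w)) • NQ w) w :=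
    h1.comp_hasFDerivAt w (hasFDerivAt_normSq w)
  have h2 := hc.smul (hasFDerivAt_id w)
  have hfun : Gq φ ε = fun z : ℂ => uu1 φ ε (Complex.normSq z) • z := by
    funext z
    rw [Gq, Complex.real_smul]
  rw [hfun]
  exact h2

lemma wirt_DGf (φ : ℝ → ℝ) (ε : ℝ) (w : ℂ) :
    (DGf φ ε w 1 - Complex.I * DGf φ ε w Complex.I) / 2 =
      ((uu1 φ ε (Complex.normSq w) : ℝ) : ℂ) * (starRingEnd ℂ) w := by
  unfold DGf NQ
  apply Complex.ext <;>
    simp [Complex.div_re, Complex.div_im, Complex.normSq_apply, Complex.conj_re,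
      Complex.conj_im, Complex.mul_re, Complex.mul_im] <;> ring

lemma wirtbar_DGf (φ : ℝ → ℝ) (ε : ℝ) (w : ℂ) :
    (DGf φ ε w 1 + Complex.I * DGf φ ε w Complex.I) / 2 =
      ((uu1 φ ε (Complex.normSq w) : ℝ) : ℂ) * w := by
  unfold DGf NQ
  apply Complex.ext <;>
    simp [Complex.div_re, Complex.div_im, Complex.normSq_apply, Complex.mul_re,
      Complex.mul_im] <;> ring

lemma wirt_DGq (φ : ℝ → ℝ) (ε : ℝ) (w : ℂ) :
    (DGq φ ε w 1 - Complex.I * DGq φ ε w Complex.I) / 2 =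
      ((uu2 φ ε (Complex.normSq w) * Complex.normSq w + uu1 φ ε (Complex.normSq w) : ℝ) : ℂ) := by
  unfold DGq NQ
  apply Complex.ext <;>
    simp [Complex.div_re, Complex.div_im, Complex.normSq_apply, Complex.mul_re,
      Complex.mul_im, Complex.real_smul] <;> ring

lemma normSq_mem {w : ℂ} (hw0 : 0 < ‖w‖) (hw1 : ‖w‖ < 1) :
    Complex.normSq w ∈ Ioo (0:ℝ) 1 := by
  rw [← Complex.sq_norm]
  constructor
  · positivity
  · nlinarith

lemma logfacts {w : ℂ} (hw0 : 0 < ‖w‖) (hw1 : ‖w‖ < 1) :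
    0 < Real.log (1 / ‖w‖) ∧
    -Real.log (Complex.normSq w) = 2 * Real.log (1 / ‖w‖) := by
  have h1 : Real.log (1 / ‖w‖) = -Real.log (‖w‖) := by
    rw [one_div, Real.log_inv]
  constructor
  · rw [h1]
    exact neg_pos.2 (Real.log_neg hw0 hw1)
  · rw [← Complex.sq_norm, Real.log_pow, h1]
    push_cast
    ring

lemma abs_Gf_le_one {φ : ℝ → ℝ} {ε : ℝ} (hφ0 : ∀ t : ℝ, 0 ≤ φ t) (hφ1 : ∀ t : ℝ, φ t ≤ 1)
    (w : ℂ) : ‖Gf φ ε w‖ ≤ 1 := by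
  rw [Gf, Complex.norm_real, Real.norm_eq_abs]
  rw [abs_le]
  unfold uu
  constructor
  · linarith [hφ1 (aA ε (Complex.normSq w))]
  · linarith [hφ0 (aA ε (Complex.normSq w))]

lemma bound_B {φ : ℝ → ℝ} {ε : ℝ} (hφle : ∀ t : ℝ, t ≤ 0 → φ t = 1)
    (hφge : ∀ t : ℝ, 1 ≤ t → φ t = 0)
    (hφbound : ∀ t : ℝ, |deriv φ t| + |deriv (deriv φ) t| < 10)
    (hε : 0 < ε) {w : ℂ} (hw0 : 0 < ‖w‖) (hw1 : ‖w‖ < 1) :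
    |uu1 φ ε (Complex.normSq w)| * ‖w‖ ≤
      10 / (‖w‖ * Real.log (1 / ‖w‖)) := by
  obtain ⟨hL, hlog⟩ := logfacts hw0 hw1
  set r := ‖w‖
  set L := Real.log (1 / r)
  have ht : Complex.normSq w ∈ Ioo (0:ℝ) 1 := normSq_mem hw0 hw1
  have h := bound_uu1 hφle hφge hφbound hε ht
  have ht2 : Complex.normSq w = r ^ 2 := (Complex.sq_norm w).symm
  have heq : Complex.normSq w * -Real.log (Complex.normSq w) = r ^ 2 * (2 * L) := by
    rw [hlog, ht2]
  rw [heq] at h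
  calc |uu1 φ ε (Complex.normSq w)| * r ≤ (20 / (r ^ 2 * (2 * L))) * r :=
        mul_le_mul_of_nonneg_right h (le_of_lt hw0)
    _ = 10 / (r * L) := by field_simp; ring

lemma bound_Diag {φ : ℝ → ℝ} {ε : ℝ} (hφle : ∀ t : ℝ, t ≤ 0 → φ t = 1)
    (hφge : ∀ t : ℝ, 1 ≤ t → φ t = 0)
    (hφbound : ∀ t : ℝ, |deriv φ t| + |deriv (deriv φ) t| < 10)
    (hε : 0 < ε) {w : ℂ} (hw0 : 0 < ‖w‖) (hw1 : ‖w‖ < 1) :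
    |uu2 φ ε (Complex.normSq w) * Complex.normSq w + uu1 φ ε (Complex.normSq w)| ≤
      (10 / (‖w‖ * Real.log (1 / ‖w‖))) *
      (10 / (‖w‖ * Real.log (1 / ‖w‖))) := by
  obtain ⟨hL, hlog⟩ := logfacts hw0 hw1
  set r := ‖w‖
  set L := Real.log (1 / r)
  have ht : Complex.normSq w ∈ Ioo (0:ℝ) 1 := normSq_mem hw0 hw1
  have h := bound_lap hφle hφge hφbound hε ht
  have ht2 : Complex.normSq w = r ^ 2 := (Complex.sq_norm w).symm
  have heq : Complex.normSq w * (Real.log (Complex.normSq w)) ^ 2 = r ^ 2 * (4 * L ^ 2) := by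
    have : Real.log (Complex.normSq w) = -(2 * L) := by linarith [hlog]
    rw [this, ht2]; ring
  rw [heq] at h
  refine h.trans ?_
  rw [div_le_iff₀ (by positivity)]
  have h1 : 10 / (r * L) * (10 / (r * L)) = 100 / (r ^ 2 * L ^ 2) := by
    field_simp; ring
  rw [h1, div_mul_eq_mul_div, le_div_iff₀ (by positivity)]
  nlinarith [mul_pos (pow_pos hw0 2) (pow_pos hL 2)]

lemma logOneDiv (w : ℂ) : Real.log (1 / ‖w‖) = -Real.log (Complex.normSq w) / 2 := by
  rw [← Complex.sq_norm, Real.log_pow, one_div, Real.log_inv]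
  push_cast
  ring

lemma cutoff_eq (φ : ℝ → ℝ) (ε : ℝ) (m l : ℕ) :
    cutoffProd φ ε m l =
      fun y => ∏ i ∈ Finset.univ.filter (fun i : Fin m => (i : ℕ) < l), Gf φ ε (y i) := by
  funext y
  rw [cutoffProd, Complex.ofReal_prod]
  refine Finset.prod_congr rfl fun i _ => ?_
  rw [Gf, uu, aA, logOneDiv]

lemma prod_hasFDerivAt {m : ℕ} (F : Fin m → ℂ → ℂ) (F' : Fin m → (ℂ →L[ℝ] ℂ)) (z : Fin m → ℂ)
    (T : Finset (Fin m)) (h : ∀ k ∈ T, HasFDerivAt (F k) (F' k) (z k)) :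
    HasFDerivAt (fun y : Fin m → ℂ => ∏ k ∈ T, F k (y k))
      (∑ k ∈ T, (∏ j ∈ T.erase k, F j (z j)) •
        ((F' k).comp (ContinuousLinearMap.proj k))) z := by
  classical
  refine HasFDerivAt.finset_prod (fun k hk => ?_)
  have hp : HasFDerivAt (fun y : Fin m → ℂ => y k)
      (ContinuousLinearMap.proj (R := ℝ) (φ := fun _ : Fin m => ℂ) k) z :=
    (ContinuousLinearMap.proj (R := ℝ) (φ := fun _ : Fin m => ℂ) k).hasFDerivAt
  exact (h k hk).comp z hp

lemma eval_single {m : ℕ} (T : Finset (Fin m)) (P : Fin m → ℂ) (F' : Fin m → ℂ →L[ℝ] ℂ)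
    (i : Fin m) (c : ℂ) :
    (∑ k ∈ T, P k • ((F' k).comp (ContinuousLinearMap.proj k))) ((Pi.single i c : Fin m → ℂ))
      = if i ∈ T then P i • F' i c else 0 := by
  classical
  rw [ContinuousLinearMap.sum_apply]
  have h : ∀ k ∈ T, (P k • ((F' k).comp (ContinuousLinearMap.proj k)))
        ((Pi.single i c : Fin m → ℂ))
      = if k = i then P k • F' k c else 0 := by
    intro k _
    by_cases hk : k = i
    · subst hk
      simp
    · simp [ContinuousLinearMap.proj_apply, Pi.single_eq_of_ne hk, hk]
  rw [Finset.sum_congr rfl h, Finset.sum_ite_eq' T i (fun k => P k • F' k c)]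

lemma fderiv_prod_single {m : ℕ} (F : Fin m → ℂ → ℂ) (F' : Fin m → (ℂ →L[ℝ] ℂ)) (z : Fin m → ℂ)
    (T : Finset (Fin m)) (h : ∀ k ∈ T, HasFDerivAt (F k) (F' k) (z k)) (i : Fin m) (c : ℂ) :
    (fderiv ℝ (fun y : Fin m → ℂ => ∏ k ∈ T, F k (y k)) z) ((Pi.single i c : Fin m → ℂ))
      = if i ∈ T then (∏ j ∈ T.erase i, F j (z j)) * F' i c else 0 := by
  classical
  rw [(prod_hasFDerivAt F F' z T h).fderiv]
  rw [eval_single T (fun k => ∏ j ∈ T.erase k, F j (z j)) F' i c]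
  simp [smul_eq_mul]

theorem stmt_3 (φ : ℝ → ℝ) (hφsmooth : ContDiff ℝ (⊤ : ℕ∞) φ) (hφanti : Antitone φ)
    (hφ0 : ∀ t : ℝ, 0 ≤ φ t) (hφ1 : ∀ t : ℝ, φ t ≤ 1)
    (hφle : ∀ t : ℝ, t ≤ 0 → φ t = 1) (hφge : ∀ t : ℝ, 1 ≤ t → φ t = 0)
    (hφbound : ∀ t : ℝ, |deriv φ t| + |deriv (deriv φ) t| < 10)
    (m l : ℕ) (hl1 : 1 ≤ l) (hlm : l ≤ m) :
    ∃ C : ℝ, 0 < C ∧ ∀ ε : ℝ, 0 < ε →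
      ∀ z : Fin m → ℂ,
        (∀ i : Fin m, (i : ℕ) < l → 0 < ‖z i‖ ∧ ‖z i‖ < 1) →
        (∀ i : Fin m, l ≤ (i : ℕ) → ‖z i‖ < 1) →
        -- (i) first-order bound in the directions `i < l`
        (∀ i : Fin m, (i : ℕ) < l →
          ‖wDm i (cutoffProd φ ε m l) z‖
            ≤ C / (‖z i‖ * Real.log (1 / ‖z i‖))) ∧
        -- (ii) `Φ` does not depend on the variables `z_i` with `i ≥ l`
        (∀ i : Fin m, l ≤ (i : ℕ) → wDm i (cutoffProd φ ε m l) z = 0) ∧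
        -- (iii) the complex Hessian is bounded by the local Poincaré form
        (∀ w : Fin m → ℂ,
          ‖∑ i : Fin m, ∑ j : Fin m,
              wDm i (fun y => wDbarm j (cutoffProd φ ε m l) y) z * w i * (starRingEnd ℂ) (w j)‖
            ≤ C * ∑ i ∈ Finset.univ.filter (fun i : Fin m => (i : ℕ) < l),
                ‖w i‖ ^ 2 /
                  (‖z i‖ ^ 2 * (Real.log (1 / ‖z i‖)) ^ 2)) := by
  classical
  refine ⟨400 * m + 400, by positivity, ?_⟩
  intro ε hε z hz1 hz2
  set S : Finset (Fin m) := Finset.univ.filter (fun i : Fin m => (i : ℕ) < l) with hSdef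
  have hmemS : ∀ i : Fin m, i ∈ S ↔ (i : ℕ) < l := by
    intro i; simp [hSdef]
  have hzS : ∀ k ∈ S, Complex.normSq (z k) ∈ Set.Ioo (0:ℝ) 1 := by
    intro k hk
    obtain ⟨h1, h2⟩ := hz1 k ((hmemS k).1 hk)
    exact normSq_mem h1 h2
  set U : Set (Fin m → ℂ) := {y | ∀ k ∈ S, Complex.normSq (y k) ∈ Set.Ioo (0:ℝ) 1} with hUdef
  have hUopen : IsOpen U := by
    have hU2 : U = ⋂ k ∈ S, {y : Fin m → ℂ | Complex.normSq (y k) ∈ Set.Ioo (0:ℝ) 1} := by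
      ext y; simp [hUdef]
    rw [hU2]
    exact isOpen_biInter_finset (fun k _ =>
      (isOpen_Ioo).preimage (Complex.continuous_normSq.comp (continuous_apply k)))
  have hzU : z ∈ U := hzS
  have hGfd : ∀ y ∈ U, ∀ k ∈ S, HasFDerivAt (Gf φ ε) (DGf φ ε (y k)) (y k) :=
    fun y hy k hk => hasFDerivAt_Gf hφsmooth hε (hy k hk)
  have hprod1 : ∀ (T' : Finset (Fin m)) (y : Fin m → ℂ),
      ‖∏ j ∈ T', Gf φ ε (y j)‖ ≤ 1 := by
    intro T' y
    rw [norm_prod]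
    exact Finset.prod_le_one (fun j _ => norm_nonneg _)
      (fun j _ => abs_Gf_le_one hφ0 hφ1 _)
  have hpos : ∀ i : Fin m, (i:ℕ) < l →
      0 < ‖z i‖ * Real.log (1 / ‖z i‖) := by
    intro i hi
    obtain ⟨h1, h2⟩ := hz1 i hi
    exact mul_pos h1 (logfacts h1 h2).1
  have hC10 : (10:ℝ) ≤ 400 * m + 400 := by
    have : (0:ℝ) ≤ m := Nat.cast_nonneg m
    linarith
  refine ⟨?_, ?_, ?_⟩
  · -- part (i)
    intro i hi
    have hiS : i ∈ S := (hmemS i).2 hi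
    obtain ⟨h1, h2⟩ := hz1 i hi
    rw [wDm, cutoff_eq φ ε m l]
    rw [fderiv_prod_single (fun _ => Gf φ ε) (fun k => DGf φ ε (z k)) z S (hGfd z hzU) i 1]
    rw [fderiv_prod_single (fun _ => Gf φ ε) (fun k => DGf φ ε (z k)) z S (hGfd z hzU) i
      Complex.I]
    rw [if_pos hiS, if_pos hiS]
    have hcomb : ((∏ j ∈ S.erase i, Gf φ ε (z j)) * DGf φ ε (z i) 1
        - Complex.I * ((∏ j ∈ S.erase i, Gf φ ε (z j)) * DGf φ ε (z i) Complex.I)) / 2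
        = (∏ j ∈ S.erase i, Gf φ ε (z j)) *
          ((DGf φ ε (z i) 1 - Complex.I * DGf φ ε (z i) Complex.I) / 2) := by ring
    rw [hcomb, wirt_DGf]
    rw [norm_mul, norm_mul, Complex.norm_real, Real.norm_eq_abs, Complex.norm_conj]
    calc ‖∏ j ∈ S.erase i, Gf φ ε (z j)‖ *
          (|uu1 φ ε (Complex.normSq (z i))| * ‖z i‖)
        ≤ 1 * (10 / (‖z i‖ * Real.log (1 / ‖z i‖))) := by
          refine mul_le_mul (hprod1 _ _) (bound_B hφle hφge hφbound hε h1 h2) ?_ one_pos.le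
          positivity
      _ ≤ (400 * m + 400) / (‖z i‖ * Real.log (1 / ‖z i‖)) := by
          rw [one_mul]
          gcongr
          exact le_of_lt (hpos i hi)
  · -- part (ii)
    intro i hi
    have hiS : i ∉ S := by
      rw [hmemS i]; omega
    rw [wDm, cutoff_eq φ ε m l]
    rw [fderiv_prod_single (fun _ => Gf φ ε) (fun k => DGf φ ε (z k)) z S (hGfd z hzU) i 1]
    rw [fderiv_prod_single (fun _ => Gf φ ε) (fun k => DGf φ ε (z k)) z S (hGfd z hzU) i
      Complex.I]
    rw [if_neg hiS, if_neg hiS]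
    simp
  · -- part (iii)
    intro w
    set Bc : Fin m → ℝ := fun i => if i ∈ S then
        10 / (‖z i‖ * Real.log (1 / ‖z i‖)) else 0 with hBcdef
    have hBc0 : ∀ i, 0 ≤ Bc i := by
      intro i
      simp only [hBcdef]
      by_cases hi : i ∈ S
      · simp only [if_pos hi]
        exact le_of_lt (div_pos (by norm_num) (hpos i ((hmemS i).1 hi)))
      · simp only [if_neg hi, le_refl]
    have hTabs : ∀ i j : Fin m,
        ‖wDm i (fun y => wDbarm j (cutoffProd φ ε m l) y) z‖ ≤ Bc i * Bc j := by
      intro i j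
      by_cases hjS : j ∈ S
      · -- j ∈ S
        have hjl := (hmemS j).1 hjS
        obtain ⟨hj1, hj2⟩ := hz1 j hjl
        have hev : (fun y => wDbarm j (cutoffProd φ ε m l) y) =ᶠ[nhds z]
            (fun y => ∏ k ∈ S, (fun k' => if k' = j then Gq φ ε else Gf φ ε) k (y k)) := by
          filter_upwards [hUopen.mem_nhds hzU] with y hy
          rw [wDbarm, cutoff_eq φ ε m l]
          rw [fderiv_prod_single (fun _ => Gf φ ε) (fun k => DGf φ ε (y k)) y S (hGfd y hy) j 1]
          rw [fderiv_prod_single (fun _ => Gf φ ε) (fun k => DGf φ ε (y k)) y S (hGfd y hy) j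
            Complex.I]
          rw [if_pos hjS, if_pos hjS]
          have hcomb : ((∏ k ∈ S.erase j, Gf φ ε (y k)) * DGf φ ε (y j) 1
              + Complex.I * ((∏ k ∈ S.erase j, Gf φ ε (y k)) * DGf φ ε (y j) Complex.I)) / 2
              = (∏ k ∈ S.erase j, Gf φ ε (y k)) *
                ((DGf φ ε (y j) 1 + Complex.I * DGf φ ε (y j) Complex.I) / 2) := by ring
          rw [hcomb, wirtbar_DGf]
          rw [← Finset.mul_prod_erase S _ hjS]
          simp only [if_pos rfl, eq_self_iff_true, ite_true]
          rw [Finset.prod_congr rfl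
            (fun k hk => by simp only [if_neg (Finset.ne_of_mem_erase hk)] : ∀ k ∈ S.erase j,
              (fun k' => if k' = j then Gq φ ε else Gf φ ε) k (y k) = Gf φ ε (y k))]
          simp only [Gq]
          ring
        have hFF : ∀ k ∈ S, HasFDerivAt ((fun k' => if k' = j then Gq φ ε else Gf φ ε) k)
            ((fun k' => if k' = j then DGq φ ε (z k') else DGf φ ε (z k')) k) (z k) := by
          intro k hk
          by_cases hkj : k = j
          · subst hkj
            simp only [if_pos rfl, eq_self_iff_true, ite_true]
            exact hasFDerivAt_Gq hφsmooth hε (hzS k hk)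
          · simp only [if_neg hkj]
            exact hasFDerivAt_Gf hφsmooth hε (hzS k hk)
        by_cases hiS : i ∈ S
        · -- i ∈ S : main case
          have hil := (hmemS i).1 hiS
          obtain ⟨hi1, hi2⟩ := hz1 i hil
          rw [wDm, hev.fderiv_eq]
          rw [fderiv_prod_single _ _ z S hFF i 1, fderiv_prod_single _ _ z S hFF i Complex.I]
          rw [if_pos hiS, if_pos hiS]
          set Q : ℂ := ∏ p ∈ S.erase i, (fun k' => if k' = j then Gq φ ε else Gf φ ε) p (z p)
            with hQdef
          have hcomb : (Q * (fun k' => if k' = j then DGq φ ε (z k') else DGf φ ε (z k')) i 1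
              - Complex.I *
                (Q * (fun k' => if k' = j then DGq φ ε (z k') else DGf φ ε (z k')) i
                  Complex.I)) / 2
              = Q * (((fun k' => if k' = j then DGq φ ε (z k') else DGf φ ε (z k')) i 1
                  - Complex.I *
                    (fun k' => if k' = j then DGq φ ε (z k') else DGf φ ε (z k')) i
                      Complex.I) / 2) := by ring
          rw [hcomb]
          by_cases hij : i = j
          · -- diagonal
            subst hij
            simp only [if_pos rfl, eq_self_iff_true, ite_true]
            rw [wirt_DGq]
            rw [norm_mul, Complex.norm_real, Real.norm_eq_abs]
            have hQ1 : ‖Q‖ ≤ 1 := by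
              rw [hQdef]
              rw [Finset.prod_congr rfl
                (fun k hk => by simp only [if_neg (Finset.ne_of_mem_erase hk)] :
                  ∀ k ∈ S.erase i,
                  (fun k' => if k' = i then Gq φ ε else Gf φ ε) k (z k) = Gf φ ε (z k))]
              exact hprod1 _ _
            have hd := bound_Diag hφle hφge hφbound hε hi1 hi2
            have : Bc i * Bc i = 10 / (‖z i‖ * Real.log (1 / ‖z i‖)) *
                (10 / (‖z i‖ * Real.log (1 / ‖z i‖))) := by
              simp only [hBcdef, if_pos hiS]
            rw [this]
            calc ‖Q‖ * |uu2 φ ε (Complex.normSq (z i)) * Complex.normSq (z i) +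
                  uu1 φ ε (Complex.normSq (z i))|
                ≤ 1 * (10 / (‖z i‖ * Real.log (1 / ‖z i‖)) *
                  (10 / (‖z i‖ * Real.log (1 / ‖z i‖)))) :=
                  mul_le_mul hQ1 hd (abs_nonneg _) one_pos.le
              _ = _ := one_mul _
          · -- off-diagonal
            simp only [if_neg hij]
            rw [wirt_DGf]
            rw [norm_mul, norm_mul, Complex.norm_real, Real.norm_eq_abs, Complex.norm_conj]
            have hjmem : j ∈ S.erase i := Finset.mem_erase.2 ⟨fun h => hij h.symm, hjS⟩
            have hQbound : ‖Q‖ ≤ Bc j := by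
              rw [hQdef, ← Finset.mul_prod_erase _ _ hjmem]
              simp only [if_pos rfl, eq_self_iff_true, ite_true]
              rw [Finset.prod_congr rfl
                (fun k hk => by
                  simp only [if_neg (Finset.ne_of_mem_erase hk)] : ∀ k ∈ (S.erase i).erase j,
                  (fun k' => if k' = j then Gq φ ε else Gf φ ε) k (z k) = Gf φ ε (z k))]
              rw [norm_mul]
              have hGq : ‖Gq φ ε (z j)‖ ≤ Bc j := by
                simp only [Gq]; rw [norm_mul, Complex.norm_real, Real.norm_eq_abs]
                simp only [hBcdef, if_pos hjS]
                exact bound_B hφle hφge hφbound hε hj1 hj2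
              calc ‖Gq φ ε (z j)‖ * ‖∏ k ∈ (S.erase i).erase j,
                    Gf φ ε (z k)‖
                  ≤ ‖Gq φ ε (z j)‖ * 1 :=
                    mul_le_mul_of_nonneg_left (hprod1 _ _) (norm_nonneg _)
                _ = ‖Gq φ ε (z j)‖ := mul_one _
                _ ≤ Bc j := hGq
            have hBi : |uu1 φ ε (Complex.normSq (z i))| * ‖z i‖ ≤ Bc i := by
              simp only [hBcdef, if_pos hiS]
              exact bound_B hφle hφge hφbound hε hi1 hi2
            calc ‖Q‖ * (|uu1 φ ε (Complex.normSq (z i))| * ‖z i‖)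
                ≤ Bc j * Bc i := mul_le_mul hQbound hBi
                  (mul_nonneg (abs_nonneg _) (norm_nonneg _)) (hBc0 j)
              _ = Bc i * Bc j := mul_comm _ _
        · -- i ∉ S
          rw [wDm, hev.fderiv_eq]
          rw [fderiv_prod_single _ _ z S hFF i 1, fderiv_prod_single _ _ z S hFF i Complex.I]
          rw [if_neg hiS, if_neg hiS]
          simp only [mul_zero, sub_zero, zero_sub, zero_div]
          norm_num
          exact mul_nonneg (hBc0 i) (hBc0 j)
      · -- j ∉ S
        have hev : (fun y => wDbarm j (cutoffProd φ ε m l) y) =ᶠ[nhds z]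
            (fun _ => (0:ℂ)) := by
          filter_upwards [hUopen.mem_nhds hzU] with y hy
          rw [wDbarm, cutoff_eq φ ε m l]
          rw [fderiv_prod_single (fun _ => Gf φ ε) (fun k => DGf φ ε (y k)) y S (hGfd y hy) j 1]
          rw [fderiv_prod_single (fun _ => Gf φ ε) (fun k => DGf φ ε (y k)) y S (hGfd y hy) j
            Complex.I]
          rw [if_neg hjS, if_neg hjS]
          simp
        have hz0 : wDm i (fun y => wDbarm j (cutoffProd φ ε m l) y) z = 0 := by
          rw [wDm, hev.fderiv_eq]
          simp
        rw [hz0, norm_zero]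
        exact mul_nonneg (hBc0 i) (hBc0 j)
    -- assemble the sum
    have hT : ∀ i j : Fin m,
        ‖wDm i (fun y => wDbarm j (cutoffProd φ ε m l) y) z * w i
          * (starRingEnd ℂ) (w j)‖ ≤ (Bc i * ‖w i‖) * (Bc j * ‖w j‖) := by
      intro i j
      rw [norm_mul, norm_mul, Complex.norm_conj]
      calc ‖wDm i (fun y => wDbarm j (cutoffProd φ ε m l) y) z‖ *
            ‖w i‖ * ‖w j‖
          ≤ (Bc i * Bc j) * ‖w i‖ * ‖w j‖ := by
            have h0 := hTabs i j
            have h1 := norm_nonneg (w i)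
            have h2 := norm_nonneg (w j)
            exact mul_le_mul_of_nonneg_right (mul_le_mul_of_nonneg_right h0 h1) h2
        _ = (Bc i * ‖w i‖) * (Bc j * ‖w j‖) := by ring
    have hsum_nonneg : (0:ℝ) ≤ ∑ i ∈ S, ‖w i‖ ^ 2 /
        (‖z i‖ ^ 2 * (Real.log (1 / ‖z i‖)) ^ 2) := by
      refine Finset.sum_nonneg (fun i hi => ?_)
      positivity
    calc ‖∑ i : Fin m, ∑ j : Fin m,
            wDm i (fun y => wDbarm j (cutoffProd φ ε m l) y) z * w i * (starRingEnd ℂ) (w j)‖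
        ≤ ∑ i : Fin m, ‖∑ j : Fin m,
            wDm i (fun y => wDbarm j (cutoffProd φ ε m l) y) z * w i * (starRingEnd ℂ) (w j)‖ :=
          norm_sum_le _ _
      _ ≤ ∑ i : Fin m, ∑ j : Fin m, ‖wDm i (fun y => wDbarm j (cutoffProd φ ε m l) y) z * w i * (starRingEnd ℂ) (w j)‖ :=
          Finset.sum_le_sum (fun i _ => norm_sum_le _ _)
      _ ≤ ∑ i : Fin m, ∑ j : Fin m, (Bc i * ‖w i‖) * (Bc j * ‖w j‖) :=
          Finset.sum_le_sum (fun i _ => Finset.sum_le_sum (fun j _ => hT i j))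
      _ = (∑ i : Fin m, Bc i * ‖w i‖) ^ 2 := by
          rw [sq, Finset.sum_mul_sum]
      _ ≤ (Finset.univ.card : ℝ) * ∑ i : Fin m, (Bc i * ‖w i‖) ^ 2 := by
          exact sq_sum_le_card_mul_sum_sq
      _ = (m : ℝ) * ∑ i : Fin m, (Bc i * ‖w i‖) ^ 2 := by
          rw [Finset.card_univ, Fintype.card_fin]
      _ = (m : ℝ) * ∑ i ∈ S, (Bc i * ‖w i‖) ^ 2 := by
          congr 1
          refine (Finset.sum_subset (Finset.subset_univ S) (fun x _ hx => ?_)).symm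
          simp only [hBcdef, if_neg hx]
          simp
      _ ≤ (400 * m + 400) * ∑ i ∈ S, ‖w i‖ ^ 2 /
            (‖z i‖ ^ 2 * (Real.log (1 / ‖z i‖)) ^ 2) := by
          have hterm : ∀ i ∈ S, (Bc i * ‖w i‖) ^ 2 =
              100 * (‖w i‖ ^ 2 /
                (‖z i‖ ^ 2 * (Real.log (1 / ‖z i‖)) ^ 2)) := by
            intro i hi
            obtain ⟨h1, h2⟩ := hz1 i ((hmemS i).1 hi)
            have hL := (logfacts h1 h2).1
            simp only [hBcdef, if_pos hi]
            field_simp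
            ring
          rw [Finset.sum_congr rfl hterm, ← Finset.mul_sum]
          rw [show (m : ℝ) * (100 * ∑ i ∈ S, ‖w i‖ ^ 2 /
              (‖z i‖ ^ 2 * (Real.log (1 / ‖z i‖)) ^ 2)) =
            (100 * m) * ∑ i ∈ S, ‖w i‖ ^ 2 /
              (‖z i‖ ^ 2 * (Real.log (1 / ‖z i‖)) ^ 2) from by ring]
          refine mul_le_mul_of_nonneg_right ?_ hsum_nonneg
          have : (0:ℝ) ≤ m := Nat.cast_nonneg m
          linarith
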